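/- arXiv:1609.08054 — 4 statements merged into one kernel-verified Lean document; each statement's English description precedes it below -/
import Mathlib

section
/- If N is a 2-absorbing second submodule of M and I is an ideal of R with I ⊄ Ann_R(N), then I•N is a 2-absorbing second submodule of M. -/
open Pointwise

/-- A proper submodule `L` is completely irreducible if whenever `L` is the
intersection of a family of submodules, it equals one of them. -/
def IsCompletelyIrreducible {R M : Type*} [CommRing R] [AddCommGroup M] [Module R M]
    (L : Submodule R M) : Prop :=
  L ≠ ⊤ ∧ ∀ S : Set (Submodule R M), L = sInf S → L ∈ S

/-- A nonzero submodule `N` is 2-absorbing second if whenever `a b : R`, `L` is a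
completely irreducible submodule, and `a • b • N ⊆ L`, then `a • N ⊆ L` or
`b • N ⊆ L` or `a * b ∈ Ann(N)`. -/
def Is2AbsorbingSecond {R M : Type*} [CommRing R] [AddCommGroup M] [Module R M]
    (N : Submodule R M) : Prop :=
  N ≠ ⊥ ∧ ∀ (a b : R) (L : Submodule R M), IsCompletelyIrreducible L →
    a • b • N ≤ L → a • N ≤ L ∨ b • N ≤ L ∨ a * b ∈ N.annihilator

namespace Submodule

variable {R M : Type*} [CommSemiring R] [AddCommMonoid M] [Module R M]

theorem smul_le_iff_le_colon {I : Ideal R} {N L : Submodule R M} :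
    I • N ≤ L ↔ I ≤ L.colon N := by
  rw [smul_le, SetLike.le_def]
  simp only [mem_colon, SetLike.mem_coe]

theorem smul_ideal_smul_comm (r : R) (I : Ideal R) (N : Submodule R M) :
    r • (I • N) = I • (r • N) := by
  rw [← ideal_span_singleton_smul, ← ideal_span_singleton_smul, ← Submodule.mul_smul,
    mul_comm, Submodule.mul_smul]

theorem smul_ideal_smul_le_iff {r : R} {I : Ideal R} {N L : Submodule R M} :
    r • (I • N) ≤ L ↔ I ≤ L.colon (r • N : Submodule R M) := by
  rw [smul_ideal_smul_comm, smul_le_iff_le_colon]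

theorem mem_annihilator_ideal_smul_iff {r : R} {I : Ideal R} {N : Submodule R M} :
    r ∈ (I • N).annihilator ↔ I ≤ (r • N).annihilator := by
  rw [← bot_colon, ← bot_colon, mem_colon_iff_le, smul_ideal_smul_le_iff]

theorem mem_colon_smul_iff {c r : R} {N L : Submodule R M} :
    c ∈ L.colon (r • N : Submodule R M) ↔ c * r ∈ L.colon N := by
  rw [mem_colon_iff_le, mem_colon_iff_le, smul_smul]

theorem mem_annihilator_smul_iff {c r : R} {N : Submodule R M} :
    c ∈ (r • N).annihilator ↔ c * r ∈ N.annihilator := by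
  rw [← bot_colon, ← bot_colon, mem_colon_smul_iff]

end Submodule

open Submodule

namespace Is2AbsorbingSecond

variable {R M : Type*} [CommRing R] [AddCommGroup M] [Module R M] {N L : Submodule R M}

theorem mem_colon_or_mem_colon_or_mem_annihilator {a b : R} (hN : Is2AbsorbingSecond N)
    (hL : IsCompletelyIrreducible L) (hab : a * b ∈ L.colon N) :
    a ∈ L.colon N ∨ b ∈ L.colon N ∨ a * b ∈ N.annihilator := by
  simp only [mem_colon_iff_le, ← smul_smul] at hab ⊢
  exact hN.2 a b L hL hab

/-- Each `c ∈ I` lies in one of the two ideals, by the 2-absorbing property applied to `c * a`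
and `b`; an ideal covered by two ideals lies in one of them. -/
theorem le_colon_or_le_annihilator {a b : R} {I : Ideal R} (hN : Is2AbsorbingSecond N)
    (hL : IsCompletelyIrreducible L) (hab : I ≤ L.colon ((a * b) • N : Submodule R M))
    (hb : b ∉ L.colon N) :
    I ≤ L.colon (a • N : Submodule R M) ∨ I ≤ ((a * b) • N).annihilator := by
  rw [← Ideal.subset_union]
  intro c hc
  have hcab : c * a * b ∈ L.colon N := by
    rw [mul_assoc, ← mem_colon_smul_iff]
    exact hab hc
  rcases hN.mem_colon_or_mem_colon_or_mem_annihilator hL hcab with hca | hb' | hann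
  · exact Or.inl (mem_colon_smul_iff.mpr hca)
  · exact absurd hb' hb
  · rw [mul_assoc] at hann
    exact Or.inr (mem_annihilator_smul_iff.mpr hann)

end Is2AbsorbingSecond

theorem smul_2absorbing_second
    {R M : Type*} [CommRing R] [AddCommGroup M] [Module R M]
    (N : Submodule R M) (hN : Is2AbsorbingSecond N) (I : Ideal R)
    (hI : ¬ I ≤ N.annihilator) :
    Is2AbsorbingSecond (I • N) := by
  refine ⟨fun hbot ↦ hI (le_annihilator_iff.mpr hbot), fun a b L hL hab ↦ ?_⟩
  by_cases hb : b • N ≤ L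
  · exact Or.inr (Or.inl ((smul_ideal_smul_comm b I N).trans_le (smul_le_right.trans hb)))
  rw [smul_smul, smul_ideal_smul_le_iff] at hab
  rcases hN.le_colon_or_le_annihilator hL hab (mt mem_colon_iff_le.mp hb) with ha | hann
  · exact Or.inl (smul_ideal_smul_le_iff.mpr ha)
  · exact Or.inr (Or.inr (mem_annihilator_ideal_smul_iff.mpr hann))
end

section
/- If N is a 2-absorbing second submodule of M, √(Ann_R(N)) = P for a prime ideal P of R, and L is a completely irreducible submodule of M with N ⊄ L, then √((L :_R N)) is a prime ideal of R containing P. -/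
open Pointwise

/-! Since `N` is 2-absorbing second and `L` completely irreducible, `ab ∈ (L : N)` forces
`a ∈ (L : N)`, `b ∈ (L : N)` or `ab ∈ Ann(N)`. Applied to `aⁿbⁿ`, the first two cases put `a` or
`b` in `√(L : N)`, and in the third `ab ∈ √Ann(N) = P`, so `a` or `b` lies in
`P ⊆ √(L : N)` as `Ann(N) ⊆ (L : N)`. -/

theorem Ideal.isPrime_radical_of_mul_mem {R : Type*} [CommSemiring R] {I J : Ideal R}
    (hIJ : I ≤ J) (hJ : J ≠ ⊤) (hI : I.radical.IsPrime)
    (h : ∀ a b, a * b ∈ J → a ∈ J ∨ b ∈ J ∨ a * b ∈ I) : J.radical.IsPrime := by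
  refine ⟨fun htop ↦ hJ (Ideal.radical_eq_top.mp htop), fun {a b} ⟨n, hn⟩ ↦ ?_⟩
  rw [mul_pow] at hn
  rcases h _ _ hn with ha | hb | hab
  · exact Or.inl ⟨n, ha⟩
  · exact Or.inr ⟨n, hb⟩
  · have hab : a * b ∈ I.radical := ⟨n, mul_pow a b n ▸ hab⟩
    exact (hI.mem_or_mem hab).imp (Ideal.radical_mono hIJ ·) (Ideal.radical_mono hIJ ·)

namespace Is2AbsorbingSecond

variable {R M : Type*} [CommRing R] [AddCommGroup M] [Module R M] {N L : Submodule R M}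

theorem mem_or_mem_colon_of_mul_mem (hN : Is2AbsorbingSecond N)
    (hL : IsCompletelyIrreducible L) {a b : R} (hab : a * b ∈ L.colon N) :
    a ∈ L.colon N ∨ b ∈ L.colon N ∨ a * b ∈ N.annihilator := by
  simp only [Submodule.mem_colon_iff_le, mul_smul] at hab ⊢
  exact hN.2 a b L hL hab

end Is2AbsorbingSecond

theorem Submodule.annihilator_le_colon {R M : Type*} [CommRing R] [AddCommGroup M] [Module R M]
    (N L : Submodule R M) : N.annihilator ≤ L.colon N :=
  Submodule.bot_colon (N := N) ▸ Submodule.colon_mono bot_le subset_rfl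

theorem radical_colon_prime
    {R M : Type*} [CommRing R] [AddCommGroup M] [Module R M]
    (N : Submodule R M) (hN : Is2AbsorbingSecond N) (P : Ideal R) (hP : P.IsPrime)
    (hrad : N.annihilator.radical = P)
    (L : Submodule R M) (hL : IsCompletelyIrreducible L) (hNL : ¬ N ≤ L) :
    (L.colon N).radical.IsPrime ∧ P ≤ (L.colon N).radical := by
  have hann := N.annihilator_le_colon L
  have hne : L.colon N ≠ ⊤ := fun h ↦ hNL ((Submodule.colon_eq_top_iff_subset _).mp h)
  subst hrad
  exact ⟨Ideal.isPrime_radical_of_mul_mem hann hne hP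
      (fun _ _ ↦ hN.mem_or_mem_colon_of_mul_mem hL), Ideal.radical_mono hann⟩
end

section
/- A nonzero submodule N of M is strongly 2-absorbing second if and only if for all a, b ∈ R one has a•b•N = a•N or a•b•N = b•N or a•b•N = 0. -/
open Pointwise

/-- A nonzero submodule `N` is strongly 2-absorbing second if whenever `a b : R` and
`L₁, L₂` are completely irreducible submodules with `a • b • N ⊆ L₁ ∩ L₂`, then
`a • N ⊆ L₁ ∩ L₂` or `b • N ⊆ L₁ ∩ L₂` or `a * b ∈ Ann(N)`. -/
def IsStrongly2AbsorbingSecond {R M : Type*} [CommRing R] [AddCommGroup M] [Module R M]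
    (N : Submodule R M) : Prop :=
  N ≠ ⊥ ∧ ∀ (a b : R) (L₁ L₂ : Submodule R M), IsCompletelyIrreducible L₁ →
    IsCompletelyIrreducible L₂ → a • b • N ≤ L₁ ⊓ L₂ →
    a • N ≤ L₁ ⊓ L₂ ∨ b • N ≤ L₁ ⊓ L₂ ∨ a * b ∈ N.annihilator

/-
Every submodule is the intersection of the completely irreducible submodules containing it.
Since `a • b • N` lies in both `a • N` and `b • N`, if it equals neither, one finds completely
irreducible `L₁, L₂ ⊇ a • b • N` with `a • N ⊄ L₁` and `b • N ⊄ L₂`; the strong 2-absorbing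
condition then forces `a * b ∈ Ann(N)`, i.e. `a • b • N = 0`. The converse is immediate.
-/

namespace Submodule

section CommSemiring

variable {R M : Type*} [CommSemiring R] [AddCommMonoid M] [Module R M]

theorem smul_eq_bot_iff_mem_annihilator {r : R} {N : Submodule R M} :
    r • N = ⊥ ↔ r ∈ N.annihilator := by
  simp only [eq_bot_iff, mem_annihilator, SetLike.le_def, mem_smul_pointwise_iff_exists,
    mem_bot, forall_exists_index, and_imp]
  exact ⟨fun h n hn => h (x := r • n) n hn rfl, fun h _ n hn hx => hx ▸ h n hn⟩

theorem smul_smul_le_left (a b : R) (N : Submodule R M) : a • b • N ≤ a • N :=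
  map_mono (smul_le_self_of_tower b N)

theorem smul_smul_le_right (a b : R) (N : Submodule R M) : a • b • N ≤ b • N := by
  rw [smul_smul, mul_comm, ← smul_smul]
  exact smul_smul_le_left b a N

theorem exists_maximal_notMem_of_le {m : M} {B : Submodule R M} (hm : m ∉ B) :
    ∃ L, B ≤ L ∧ Maximal (fun P : Submodule R M => m ∉ P) L :=
  zorn_le_nonempty₀ {P : Submodule R M | m ∉ P} (fun c hc hchain K hK =>
    ⟨sSup c, fun hmem => by
      obtain ⟨P, hP, hmP⟩ := (mem_sSup_of_directed ⟨K, hK⟩ hchain.directedOn).1 hmem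
      exact hc hP hmP, fun _ => le_sSup⟩) B hm

end CommSemiring

variable {R M : Type*} [CommRing R] [AddCommGroup M] [Module R M]

theorem isCompletelyIrreducible_of_maximal_notMem {m : M} {L : Submodule R M}
    (hL : Maximal (fun P : Submodule R M => m ∉ P) L) : IsCompletelyIrreducible L := by
  refine ⟨fun h => hL.prop (h ▸ trivial), fun S hS => ?_⟩
  by_contra hLS
  -- every member of `S` strictly contains `L`, hence contains `m` by maximality
  have hm : m ∈ sInf S := mem_sInf.2 fun K hK => by
    have hLK : L ≤ K := hS ▸ sInf_le hK
    by_contra hmK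
    exact hLS (le_antisymm hLK (hL.2 hmK hLK) ▸ hK)
  exact hL.prop (hS ▸ hm)

theorem exists_isCompletelyIrreducible_of_not_le {A B : Submodule R M} (h : ¬A ≤ B) :
    ∃ L, IsCompletelyIrreducible L ∧ B ≤ L ∧ ¬A ≤ L := by
  obtain ⟨m, hmA, hmB⟩ := SetLike.not_le_iff_exists.1 h
  obtain ⟨L, hBL, hL⟩ := exists_maximal_notMem_of_le hmB
  exact ⟨L, isCompletelyIrreducible_of_maximal_notMem hL, hBL, fun hAL => hL.prop (hAL hmA)⟩

theorem smul_smul_eq_of_isStrongly2AbsorbingSecond {N : Submodule R M}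
    (hN : IsStrongly2AbsorbingSecond N) (a b : R) :
    a • b • N = a • N ∨ a • b • N = b • N ∨ a • b • N = ⊥ := by
  rw [(smul_smul_le_left a b N).ge_iff_eq.symm, (smul_smul_le_right a b N).ge_iff_eq.symm]
  by_contra! ⟨ha, hb, hab⟩
  obtain ⟨L₁, hL₁, habL₁, haL₁⟩ := exists_isCompletelyIrreducible_of_not_le ha
  obtain ⟨L₂, hL₂, habL₂, hbL₂⟩ := exists_isCompletelyIrreducible_of_not_le hb
  rcases hN.2 a b L₁ L₂ hL₁ hL₂ (le_inf habL₁ habL₂) with h | h | h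
  · exact haL₁ (h.trans inf_le_left)
  · exact hbL₂ (h.trans inf_le_right)
  · exact hab (smul_smul a b N ▸ smul_eq_bot_iff_mem_annihilator.2 h)

theorem isStrongly2AbsorbingSecond_of_smul_smul_eq {N : Submodule R M} (hN : N ≠ ⊥)
    (h : ∀ a b : R, a • b • N = a • N ∨ a • b • N = b • N ∨ a • b • N = ⊥) :
    IsStrongly2AbsorbingSecond N := by
  refine ⟨hN, fun a b L₁ L₂ _ _ hle => ?_⟩
  rcases h a b with h | h | h
  · exact Or.inl (h ▸ hle)
  · exact Or.inr (Or.inl (h ▸ hle))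
  · exact Or.inr (Or.inr (smul_eq_bot_iff_mem_annihilator.1 (smul_smul a b N ▸ h)))

end Submodule

theorem strongly2AbsorbingSecond_iff_smul_eq
    {R M : Type*} [CommRing R] [AddCommGroup M] [Module R M]
    (N : Submodule R M) (hne : N ≠ ⊥) :
    IsStrongly2AbsorbingSecond N ↔
      ∀ a b : R, a • b • N = a • N ∨ a • b • N = b • N ∨ a • b • N = ⊥ :=
  ⟨Submodule.smul_smul_eq_of_isStrongly2AbsorbingSecond,
    Submodule.isStrongly2AbsorbingSecond_of_smul_smul_eq hne⟩
end

section
/- A nonzero submodule N of M is strongly 2-absorbing second if and only if for all ideals I, J of R and every submodule K of M with I•J•N ⊆ K, one has I•N ⊆ K or J•N ⊆ K or I•J ⊆ Ann_R(N). -/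
open Pointwise

/-!
Every submodule is the intersection of the completely irreducible submodules containing it, so the
defining property of a strongly 2-absorbing second submodule extends from `L₁ ⊓ L₂` to an arbitrary
submodule `K`: `a • b • N ≤ K` forces `a • N ≤ K`, `b • N ≤ K` or `a * b ∈ Ann(N)`. Read in the
colon ideal `(K : N) = {r | r • N ≤ K}`, the passage from elements to ideals is the usual
2-absorbing argument, which rests on the fact that an additive group is never the union of two
proper subgroups. The converse is the case of principal ideals.
-/

section CompletelyIrreducible

variable {R M : Type*} [CommRing R] [AddCommGroup M] [Module R M]

theorem isCompletelyIrreducible_of_forall_lt_mem {L : Submodule R M} {x : M} (hx : x ∉ L)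
    (h : ∀ T, L < T → x ∈ T) : IsCompletelyIrreducible L := by
  refine ⟨fun hL => hx (hL ▸ Submodule.mem_top), fun S hS => ?_⟩
  by_contra hLS
  refine hx (hS ▸ Submodule.mem_sInf.2 fun T hT => h T (lt_of_le_of_ne ?_ ?_))
  · exact hS ▸ sInf_le hT
  · rintro rfl
    exact hLS hT

theorem exists_isCompletelyIrreducible_ge_of_notMem {K : Submodule R M} {x : M} (hx : x ∉ K) :
    ∃ L : Submodule R M, IsCompletelyIrreducible L ∧ K ≤ L ∧ x ∉ L := by
  have hchain : ∀ c ⊆ {L : Submodule R M | K ≤ L ∧ x ∉ L}, IsChain (· ≤ ·) c →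
      ∀ y ∈ c, ∃ ub ∈ {L : Submodule R M | K ≤ L ∧ x ∉ L}, ∀ z ∈ c, z ≤ ub := by
    intro c hc hchain y hy
    refine ⟨sSup c, ⟨(hc hy).1.trans (le_sSup hy), fun hxc => ?_⟩, fun z hz => le_sSup hz⟩
    obtain ⟨z, hz, hxz⟩ := (Submodule.mem_sSup_of_directed ⟨y, hy⟩ hchain.directedOn).1 hxc
    exact (hc hz).2 hxz
  obtain ⟨L, -, hmax⟩ := zorn_le_nonempty₀ _ hchain K ⟨le_rfl, hx⟩
  refine ⟨L, isCompletelyIrreducible_of_forall_lt_mem hmax.prop.2 fun T hLT => ?_,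
    hmax.prop.1, hmax.prop.2⟩
  by_contra hxT
  exact hmax.not_prop_of_gt hLT ⟨hmax.prop.1.trans hLT.le, hxT⟩

theorem le_of_forall_isCompletelyIrreducible {N K : Submodule R M}
    (h : ∀ L : Submodule R M, IsCompletelyIrreducible L → K ≤ L → N ≤ L) : N ≤ K := by
  intro x hxN
  by_contra hxK
  obtain ⟨L, hL, hKL, hxL⟩ := exists_isCompletelyIrreducible_ge_of_notMem hxK
  exact hxL (h L hL hKL hxN)

theorem IsStrongly2AbsorbingSecond.smul_le_or_smul_le_or_mul_mem_annihilator
    {N : Submodule R M} (hN : IsStrongly2AbsorbingSecond N) {a b : R} {K : Submodule R M}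
    (h : a • b • N ≤ K) : a • N ≤ K ∨ b • N ≤ K ∨ a * b ∈ N.annihilator := by
  by_cases hab : a * b ∈ N.annihilator
  · exact Or.inr (Or.inr hab)
  by_cases haK : a • N ≤ K
  · exact Or.inl haK
  obtain ⟨L₁, hL₁, hKL₁, haL₁⟩ :
      ∃ L₁ : Submodule R M, IsCompletelyIrreducible L₁ ∧ K ≤ L₁ ∧ ¬a • N ≤ L₁ := by
    by_contra! hall
    exact haK (le_of_forall_isCompletelyIrreducible hall)
  refine Or.inr (Or.inl (le_of_forall_isCompletelyIrreducible fun L₂ hL₂ hKL₂ => ?_))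
  rcases hN.2 a b L₁ L₂ hL₁ hL₂ (h.trans (le_inf hKL₁ hKL₂)) with haL | hbL | hab'
  · exact absurd (haL.trans inf_le_left) haL₁
  · exact hbL.trans inf_le_right
  · exact absurd hab' hab

end CompletelyIrreducible

section Colon

variable {R M : Type*} [CommSemiring R] [AddCommMonoid M] [Module R M]

theorem Submodule.smul_le_iff_le_colon_s11 {I : Ideal R} {N K : Submodule R M} :
    I • N ≤ K ↔ I ≤ K.colon N := by
  rw [Submodule.smul_le]
  exact ⟨fun h r hr => Submodule.mem_colon.2 (h r hr), fun h r hr => Submodule.mem_colon.1 (h hr)⟩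

theorem Submodule.smul_smul_le_smul_smul {I J : Ideal R} {a b : R} (ha : a ∈ I) (hb : b ∈ J)
    (N : Submodule R M) : a • b • N ≤ I • J • N := by
  rw [← Submodule.ideal_span_singleton_smul b, ← Submodule.ideal_span_singleton_smul a]
  exact Submodule.smul_mono (Ideal.span_singleton_le_iff_mem I |>.2 ha)
    (Submodule.smul_mono (Ideal.span_singleton_le_iff_mem J |>.2 hb) le_rfl)

end Colon

theorem Ideal.le_or_le_or_mul_le_of_forall {R : Type*} [CommRing R] {I J P A : Ideal R}
    (h : ∀ a ∈ I, ∀ b ∈ J, a ∈ P ∨ b ∈ P ∨ a * b ∈ A) : I ≤ P ∨ J ≤ P ∨ I * J ≤ A := by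
  by_cases hI : I ≤ P
  · exact Or.inl hI
  have hrow : ∀ b ∈ J, b ∉ P → I ≤ A.colon {b} := fun b hb hbP =>
    (Ideal.subset_union.1 fun a ha => (h a ha b hb).imp id fun h' =>
      Submodule.mem_colon_singleton.2 (h'.resolve_left hbP)).resolve_left hI
  have hJ : (J : Set R) ⊆ P ∪ A.colon I := fun b hb => by
    by_cases hbP : b ∈ P
    · exact Or.inl hbP
    · refine Or.inr (Submodule.mem_colon.2 fun a ha => ?_)
      simpa [mul_comm] using hrow b hb hbP ha
  refine Or.inr ((Ideal.subset_union.1 hJ).imp id fun hJA => Ideal.mul_le.2 fun a ha b hb => ?_)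
  simpa [mul_comm] using Submodule.mem_colon.1 (hJA hb) a ha

theorem strongly2AbsorbingSecond_iff_ideal
    {R M : Type*} [CommRing R] [AddCommGroup M] [Module R M]
    (N : Submodule R M) (hne : N ≠ ⊥) :
    IsStrongly2AbsorbingSecond N ↔
      ∀ (I J : Ideal R) (K : Submodule R M), I • J • N ≤ K →
        I • N ≤ K ∨ J • N ≤ K ∨ I * J ≤ N.annihilator := by
  constructor
  · intro hN I J K hK
    have key : ∀ a ∈ I, ∀ b ∈ J,
        a ∈ K.colon N ∨ b ∈ K.colon N ∨ a * b ∈ N.annihilator := fun a ha b hb => by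
      simpa only [Submodule.mem_colon_iff_le] using
        hN.smul_le_or_smul_le_or_mul_mem_annihilator
          ((Submodule.smul_smul_le_smul_smul ha hb N).trans hK)
    simpa only [Submodule.smul_le_iff_le_colon_s11] using Ideal.le_or_le_or_mul_le_of_forall key
  · intro h
    refine ⟨hne, fun a b L₁ L₂ _ _ hab => ?_⟩
    have hspan := h (Ideal.span {a}) (Ideal.span {b}) (L₁ ⊓ L₂)
      (by rwa [Submodule.ideal_span_singleton_smul, Submodule.ideal_span_singleton_smul])
    simpa only [Submodule.ideal_span_singleton_smul, Ideal.span_singleton_mul_span_singleton,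
      Ideal.span_singleton_le_iff_mem] using hspan
end
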